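/- Let λ be a nonzero real. Suppose a positive probability distribution π on I_V satisfies, for all cells i, λ(ũ_i + γ_i) + 1 > 0 and π_i = π^S_i · ( λ(ũ_i + γ_i) + 1 )^{1/λ}, for some α ∈ ℝ^T, symmetric B, and orbit-invariant γ (this is the GS[f] model with the Cressie–Read power function f_λ). Set θ_i := (λ / |D(i)|^λ) · ũ_i. Then for every cell i and every j ∈ D(i): (π^c_i)^λ − (π^c_j)^λ = θ_i − θ_j. -/

import Mathlib

open Finset

namespace GSf

variable {r T : ℕ}

/-- A cell of the `r^T` contingency table. -/
abbrev Cell (r T : ℕ) := Fin T → Fin r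

/-- `orbit i = D(i)`: the set of coordinate permutations of the cell `i`. -/
def orbit (i : Cell r T) : Finset (Cell r T) :=
  Finset.univ.filter fun j => ∃ σ : Equiv.Perm (Fin T), j = i ∘ σ

/-- Symmetrization `π^S_i = (1/|D(i)|) ∑_{j ∈ D(i)} π_j`. -/
noncomputable def symmz (π : Cell r T → ℝ) (i : Cell r T) : ℝ :=
  (∑ j ∈ orbit i, π j) / ((orbit i).card : ℝ)

/-- The quadratic predictor `u_iᵀ α + u_iᵀ B u_i`. -/
def quadForm (u : Fin r → ℝ) (α : Fin T → ℝ) (B : Matrix (Fin T) (Fin T) ℝ)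
    (i : Cell r T) : ℝ :=
  (∑ s, α s * u (i s)) + ∑ s, ∑ t, B s t * u (i s) * u (i t)

/-- A function on cells is orbit-invariant if it is constant on each `D(i)`. -/
def OrbitInvariant (γ : Cell r T → ℝ) : Prop :=
  ∀ i j, j ∈ orbit i → γ i = γ j

/-- The `f`-divergence `D_f(p ∥ q) = ∑ q_i f(p_i/q_i)`. -/
noncomputable def Df (f : ℝ → ℝ) (p q : Cell r T → ℝ) : ℝ :=
  ∑ i, q i * f (p i / q i)

/-- Conditional probability of a cell given its symmetric set. -/
noncomputable def condProb (π : Cell r T → ℝ) (i : Cell r T) : ℝ :=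
  π i / ∑ j ∈ orbit i, π j

/-- Complete symmetry (S) model. -/
def CompletelySymmetric (π : Cell r T → ℝ) : Prop :=
  ∀ i, ∀ j ∈ orbit i, π i = π j

/-- Marginal mean `μ_s = ∑_i u_{i_s} π_i`. -/
noncomputable def margMean (u : Fin r → ℝ) (π : Cell r T → ℝ) (s : Fin T) : ℝ :=
  ∑ i, u (i s) * π i

/-- Marginal second moment `∑_i u_{i_s}² π_i`. -/
noncomputable def margSecond (u : Fin r → ℝ) (π : Cell r T → ℝ) (s : Fin T) : ℝ :=
  ∑ i, u (i s) ^ 2 * π i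

/-- Mixed moment `∑_i u_{i_s} u_{i_t} π_i`. -/
noncomputable def mixedMoment (u : Fin r → ℝ) (π : Cell r T → ℝ) (s t : Fin T) : ℝ :=
  ∑ i, u (i s) * u (i t) * π i

/-- Marginal variance `σ_s²`. -/
noncomputable def margVar (u : Fin r → ℝ) (π : Cell r T → ℝ) (s : Fin T) : ℝ :=
  margSecond u π s - (margMean u π s) ^ 2

/-- Marginal correlation `ρ_{st}`. -/
noncomputable def margCorr (u : Fin r → ℝ) (π : Cell r T → ℝ) (s t : Fin T) : ℝ :=
  (mixedMoment u π s t - margMean u π s * margMean u π t) /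
    (Real.sqrt (margVar u π s) * Real.sqrt (margVar u π t))

/-- The GS[f] model. -/
def IsGSf (u : Fin r → ℝ) (F : ℝ → ℝ) (π : Cell r T → ℝ) : Prop :=
  ∃ (α : Fin T → ℝ) (B : Matrix (Fin T) (Fin T) ℝ) (γ : Cell r T → ℝ),
    B.IsSymm ∧ OrbitInvariant γ ∧
    ∀ i, F (π i / symmz π i) = quadForm u α B i + γ i


lemma mem_orbit_self (i : Cell r T) : i ∈ orbit i := by
  simp only [orbit, Finset.mem_filter, Finset.mem_univ, true_and]
  exact ⟨1, rfl⟩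

lemma orbit_eq_of_mem {i j : Cell r T} (h : j ∈ orbit i) : orbit j = orbit i := by
  simp only [orbit, Finset.mem_filter, Finset.mem_univ, true_and] at h
  obtain ⟨σ, rfl⟩ := h
  ext k
  simp only [orbit, Finset.mem_filter, Finset.mem_univ, true_and]
  constructor
  · rintro ⟨τ, rfl⟩; exact ⟨σ * τ, rfl⟩
  · rintro ⟨τ, rfl⟩
    exact ⟨σ⁻¹ * τ, by funext t; simp⟩

lemma orbit_sum_pos {π : Cell r T → ℝ} (hπ : ∀ i, 0 < π i) (i : Cell r T) :
    0 < ∑ j ∈ orbit i, π j :=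
  Finset.sum_pos (fun j _ => hπ j) ⟨i, mem_orbit_self i⟩

lemma orbit_card_pos (i : Cell r T) : 0 < ((orbit i).card : ℝ) := by
  exact_mod_cast Finset.card_pos.2 ⟨i, mem_orbit_self i⟩

/-- Cressie–Read power case, λ ≠ 0: the relation
`(π^c_i)^λ - (π^c_j)^λ = θ_i - θ_j` with `θ_i = (λ/|D(i)|^λ) ũ_i`. -/
theorem stmt10 (r T : ℕ) (hr : 2 ≤ r) (hT : 2 ≤ T)
    (u : Fin r → ℝ) (hu : StrictMono u)
    (lam : ℝ) (hlam : lam ≠ 0)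
    (π : Cell r T → ℝ) (hπ : ∀ i, 0 < π i) (hsum : ∑ i, π i = 1)
    (α : Fin T → ℝ) (B : Matrix (Fin T) (Fin T) ℝ) (hB : B.IsSymm)
    (γ : Cell r T → ℝ) (hγ : OrbitInvariant γ)
    (hpos : ∀ i, 0 < lam * (quadForm u α B i + γ i) + 1)
    (hmodel : ∀ i, π i =
      symmz π i * (lam * (quadForm u α B i + γ i) + 1) ^ (1 / lam : ℝ)) :
    ∀ i, ∀ j ∈ orbit i,
      condProb π i ^ lam - condProb π j ^ lam =
        lam / (((orbit i).card : ℝ) ^ lam) * quadForm u α B i -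
          lam / (((orbit j).card : ℝ) ^ lam) * quadForm u α B j := by
  have key : ∀ i : Cell r T, condProb π i ^ lam =
      (lam * (quadForm u α B i + γ i) + 1) / ((orbit i).card : ℝ) ^ lam := by
    intro i
    have hS := orbit_sum_pos hπ i
    have hc := orbit_card_pos i
    have hcp := hpos i
    have hcond : condProb π i =
        (lam * (quadForm u α B i + γ i) + 1) ^ (1 / lam : ℝ) / ((orbit i).card : ℝ) := by
      rw [condProb, hmodel i, symmz]
      field_simp
    rw [hcond, Real.div_rpow (Real.rpow_nonneg hcp.le _) hc.le,
      ← Real.rpow_mul hcp.le, one_div, inv_mul_cancel₀ hlam,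
      Real.rpow_one]
  intro i j hj
  rw [key i, key j, orbit_eq_of_mem hj, hγ i j hj]
  have hc := orbit_card_pos i
  have hcl : ((orbit i).card : ℝ) ^ lam ≠ 0 := (Real.rpow_pos_of_pos hc lam).ne'
  field_simp
  ring

end GSf
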